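/- arXiv:math/0610851 — 3 statements merged into one kernel-verified Lean document; each statement's English description precedes it below -/
import Mathlib

section
/- For every pair (e₁,e₂) ∈ ℂ², the bracket defined on the basis {Vₙ}_{n∈ℤ} by the structure equations of the genus-one Krichever–Novikov vector field family is antisymmetric and satisfies the Jacobi identity, i.e. L^(e₁,e₂) is a Lie algebra over ℂ. -/
/-!
STATEMENT 0: For every pair (e₁,e₂) ∈ ℂ², the bracket defined on the basis
{Vₙ}_{n∈ℤ} by the structure equations of the genus-one Krichever–Novikov
vector field family is antisymmetric and satisfies the Jacobi identity,
i.e. L^(e₁,e₂) is a Lie algebra over ℂ.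

We model the ℂ-vector space with basis {Vₙ}_{n∈ℤ} as `ℤ →₀ ℂ`, with
Vₙ = `Finsupp.single n 1`.
-/

open scoped Classical

/-- The bracket `[Vₙ,Vₘ]` in the case `n` odd, `m` even:
`(m−n)Vₙ₊ₘ + (m−n−1)·3e₁Vₙ₊ₘ₋₂ + (m−n−2)(e₁−e₂)(e₁−e₃)Vₙ₊ₘ₋₄`,
where `e₃ = −(e₁+e₂)`. -/
noncomputable def VbrOE (e₁ e₂ : ℂ) (n m : ℤ) : ℤ →₀ ℂ :=
  ((m - n : ℤ) : ℂ) • Finsupp.single (n + m) 1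
    + (((m - n - 1 : ℤ) : ℂ) * (3 * e₁)) • Finsupp.single (n + m - 2) 1
    + (((m - n - 2 : ℤ) : ℂ) * ((e₁ - e₂) * (e₁ - (-(e₁ + e₂))))) •
        Finsupp.single (n + m - 4) 1

/-- The bracket `[Vₙ,Vₘ]` of the family `L^(e₁,e₂)` on basis elements. -/
noncomputable def Vbr (e₁ e₂ : ℂ) (n m : ℤ) : ℤ →₀ ℂ :=
  if Odd n then
    if Odd m then
      ((m - n : ℤ) : ℂ) • Finsupp.single (n + m) 1
    else VbrOE e₁ e₂ n m
  else
    if Odd m then - VbrOE e₁ e₂ m n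
    else
      ((m - n : ℤ) : ℂ) •
        (Finsupp.single (n + m) 1 + (3 * e₁) • Finsupp.single (n + m - 2) 1
          + ((e₁ - e₂) * (e₁ - (-(e₁ + e₂)))) • Finsupp.single (n + m - 4) 1)

/-- The bilinear extension of the bracket to all of `L^(e₁,e₂)`. -/
noncomputable def Lbr (e₁ e₂ : ℂ) (f g : ℤ →₀ ℂ) : ℤ →₀ ℂ :=
  f.sum fun n a => g.sum fun m b => (a * b) • Vbr e₁ e₂ n m

/-!
Both identities are linear in each argument, so it suffices to check them on basis vectors.
Once the parities of the indices are fixed, the bracket of two basis vectors is given by a single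
closed formula, and each identity becomes a polynomial identity in the indices and `e₁, e₂`
between the coefficients of finitely many basis vectors.
-/

namespace LinearMap

variable {R M N : Type*} [CommSemiring R] [AddCommMonoid M] [Module R M]

def rotate [AddCommMonoid N] [Module R N] (T : M →ₗ[R] M →ₗ[R] M →ₗ[R] N) :
    M →ₗ[R] M →ₗ[R] M →ₗ[R] N :=
  (lflip.toLinearMap ∘ₗ T).flip

@[simp]
theorem rotate_apply [AddCommMonoid N] [Module R N] (T : M →ₗ[R] M →ₗ[R] M →ₗ[R] N)
    (x y z : M) : rotate T x y z = T y z x :=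
  rfl

def jacobiator (B : M →ₗ[R] M →ₗ[R] M) : M →ₗ[R] M →ₗ[R] M →ₗ[R] M :=
  B.compr₂ B + rotate (B.compr₂ B) + rotate (rotate (B.compr₂ B))

@[simp]
theorem jacobiator_apply (B : M →ₗ[R] M →ₗ[R] M) (x y z : M) :
    jacobiator B x y z = B (B x y) z + B (B y z) x + B (B z x) y :=
  rfl

theorem jacobiator_eq_zero_of_basis {ι : Type*} (b : Module.Basis ι R M)
    {B : M →ₗ[R] M →ₗ[R] M} (h : ∀ i j k, jacobiator B (b i) (b j) (b k) = 0) :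
    jacobiator B = 0 :=
  ext_basis b b fun i j => b.ext fun k => h i j k

theorem apply_eq_neg_apply_of_basis [AddCommGroup N] [Module R N] {ι : Type*}
    (b : Module.Basis ι R M) {B : M →ₗ[R] M →ₗ[R] N}
    (h : ∀ i j, B (b i) (b j) = -B (b j) (b i)) (x y : M) : B x y = -B y x := by
  have hB : B + B.flip = 0 :=
    ext_basis b b fun i j => by simp [h i j]
  exact eq_neg_of_add_eq_zero_left (congr_fun₂ hB x y)

end LinearMap

section StructureConstants

variable (e₁ e₂ : ℂ)

local notation "V" n:max => (Finsupp.single n (1 : ℂ) : ℤ →₀ ℂ)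

local notation "Δ" => (e₁ - e₂) * (e₁ - -(e₁ + e₂))

theorem Vbr_of_odd_of_odd {n m : ℤ} (hn : Odd n) (hm : Odd m) :
    Vbr e₁ e₂ n m = ((m - n : ℤ) : ℂ) • V (n + m) := by
  simp [Vbr, hn, hm]

theorem Vbr_of_odd_of_even {n m : ℤ} (hn : Odd n) (hm : Even m) :
    Vbr e₁ e₂ n m = ((m - n : ℤ) : ℂ) • V (n + m)
      + (((m - n - 1 : ℤ) : ℂ) * (3 * e₁)) • V (n + m - 2)
      + (((m - n - 2 : ℤ) : ℂ) * Δ) • V (n + m - 4) := by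
  simp [Vbr, VbrOE, hn, Int.not_odd_iff_even.mpr hm]

theorem Vbr_of_even_of_odd {n m : ℤ} (hn : Even n) (hm : Odd m) :
    Vbr e₁ e₂ n m = ((m - n : ℤ) : ℂ) • V (n + m)
      + (((m - n + 1 : ℤ) : ℂ) * (3 * e₁)) • V (n + m - 2)
      + (((m - n + 2 : ℤ) : ℂ) * Δ) • V (n + m - 4) := by
  simp only [Vbr, VbrOE, Int.not_odd_iff_even.mpr hn, hm, if_false, if_true]
  ring_nf
  match_scalars <;> ring

theorem Vbr_of_even_of_even {n m : ℤ} (hn : Even n) (hm : Even m) :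
    Vbr e₁ e₂ n m = ((m - n : ℤ) : ℂ) •
      (V (n + m) + (3 * e₁) • V (n + m - 2) + Δ • V (n + m - 4)) := by
  simp [Vbr, Int.not_odd_iff_even.mpr hn, Int.not_odd_iff_even.mpr hm]

theorem Vbr_antisymm (n m : ℤ) : Vbr e₁ e₂ n m = -Vbr e₁ e₂ m n := by
  rcases Int.even_or_odd n with hn | hn <;> rcases Int.even_or_odd m with hm | hm <;>
  · simp only [Vbr_of_odd_of_odd, Vbr_of_odd_of_even, Vbr_of_even_of_odd, Vbr_of_even_of_even,
      hn, hm]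
    ring_nf
    match_scalars <;> ring

noncomputable def Lbrₗ : (ℤ →₀ ℂ) →ₗ[ℂ] (ℤ →₀ ℂ) →ₗ[ℂ] ℤ →₀ ℂ :=
  Finsupp.linearCombination ℂ fun n => Finsupp.linearCombination ℂ (Vbr e₁ e₂ n)

theorem Lbr_eq_Lbrₗ (f g : ℤ →₀ ℂ) : Lbr e₁ e₂ f g = Lbrₗ e₁ e₂ f g := by
  simp [Lbr, Lbrₗ, Finsupp.linearCombination_apply, Finsupp.smul_sum, smul_smul]

@[simp]
theorem Lbrₗ_single_single (n m : ℤ) : Lbrₗ e₁ e₂ (V n) (V m) = Vbr e₁ e₂ n m := by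
  simp [Lbrₗ]

theorem jacobiator_Lbrₗ_single (n m k : ℤ) :
    (Lbrₗ e₁ e₂).jacobiator (V n) (V m) (V k) = 0 := by
  rcases Int.even_or_odd n with hn | hn <;> rcases Int.even_or_odd m with hm | hm <;>
    rcases Int.even_or_odd k with hk | hk <;>
  · simp (disch := grind) only [LinearMap.jacobiator_apply, Lbrₗ_single_single, Vbr_of_odd_of_odd,
      Vbr_of_odd_of_even, Vbr_of_even_of_odd, Vbr_of_even_of_even, map_add, map_smul,
      LinearMap.add_apply, LinearMap.smul_apply]
    ring_nf
    match_scalars <;> ring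

end StructureConstants

/-- The bracket of `L^(e₁,e₂)` is antisymmetric and satisfies the Jacobi
identity, i.e. `L^(e₁,e₂)` is a complex Lie algebra, for every `(e₁,e₂) ∈ ℂ²`. -/
theorem Lbr_antisymm_and_jacobi (e₁ e₂ : ℂ) :
    (∀ f g : ℤ →₀ ℂ, Lbr e₁ e₂ f g = - Lbr e₁ e₂ g f) ∧
    (∀ f g h : ℤ →₀ ℂ,
      Lbr e₁ e₂ (Lbr e₁ e₂ f g) h + Lbr e₁ e₂ (Lbr e₁ e₂ g h) f
        + Lbr e₁ e₂ (Lbr e₁ e₂ h f) g = 0) := by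
  simp only [Lbr_eq_Lbrₗ]
  refine ⟨LinearMap.apply_eq_neg_apply_of_basis Finsupp.basisSingleOne fun n m => ?_,
    fun f g h => ?_⟩
  · simpa using Vbr_antisymm e₁ e₂ n m
  · have hJ : (Lbrₗ e₁ e₂).jacobiator = 0 :=
      LinearMap.jacobiator_eq_zero_of_basis Finsupp.basisSingleOne fun n m k => by
        simpa only [Finsupp.coe_basisSingleOne] using jacobiator_Lbrₗ_single e₁ e₂ n m k
    rw [← LinearMap.jacobiator_apply, hJ]
    rfl
end

section
/- For every (e₁,e₂) ∈ ℂ² with (e₁,e₂) ≠ (0,0), the Lie algebra L^(e₁,e₂) is not isomorphic (as a complex Lie algebra) to the Witt algebra W. -/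
open scoped Classical

/-- The Witt algebra bracket, on the ℂ-vector space with basis
`{lₙ}_{n∈ℤ}` (with `lₙ = Finsupp.single n 1`): `[lₙ,lₘ] = (m−n)lₙ₊ₘ`,
extended bilinearly. -/
noncomputable def Wbr (f g : ℤ →₀ ℂ) : ℤ →₀ ℂ :=
  f.sum fun n a => g.sum fun m b =>
    (a * b) • (((m - n : ℤ) : ℂ) • Finsupp.single (n + m) 1)

/-! Pull the standard basis of `W` back to a basis `(bₘ)` of `L^(e₁,e₂)` with
`[bₙ, bₘ] = (m - n) bₙ₊ₘ`, and read elements of `L` as Laurent polynomials in `V`. The bracket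
of `L` is the Witt bracket plus terms of degree lower by `2` and `4`, so the top coefficients of
`[b₀, bₘ] = m bₘ` give `deg b₀ = 0` and `deg bₘ = m δ`; since the `bₘ` span, `δ = ±1`, and after
the automorphism `lₘ ↦ -l₋ₘ` of `W`, `deg bₘ = m`.

The obstruction sits in the lowest coefficients. Write `βₘ` for the lowest degree of `bₘ`. The
coefficients of `[b₀, bₘ]` below `βₘ` vanish; by the parity pattern of the lower structure
constants this forces `β₀` odd, and `βₘ` odd for `m ≤ β₀ - 2`. If `(e₁ - e₂)(e₁ - e₃) ≠ 0`, the
next coefficients force `βₘ = β₀`, absurd for `m = β₀ - 2`. Otherwise `e₁ ≠ 0`, and the lowest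
coefficients of `[bₙ, bₘ] = (m - n) bₙ₊ₘ` make `m ↦ βₘ - 1` additive for `m ≤ β₀ - 2`, hence
`βₘ = q m + 1` there with `q ≥ 2`. Then `V_{β₀-2}` is no combination of the `bₘ`: only indices
`m ≤ β₀ - 2` can occur, and the lowest coefficient of the term with the smallest `m` is not
cancelled.
-/

namespace Finsupp

lemma sum_eq_sum_range_add {M N : Type*} [Zero M] [AddCommMonoid N] (f : ℤ →₀ M)
    (F : ℤ → M → N) (lo : ℤ) (len : ℕ) (hF : ∀ i, F i 0 = 0)
    (hout : ∀ i, i < lo ∨ lo + len ≤ i → F i (f i) = 0) :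
    f.sum F = ∑ a ∈ Finset.range len, F (lo + a) (f (lo + a)) := by
  let e : ℕ ↪ ℤ := ⟨fun a => lo + a, fun a b h => by simpa using h⟩
  have hsupp : Function.support (fun i => F i (f i)) ⊆ ↑((Finset.range len).map e) := by
    intro i hi
    by_contra hW
    refine hi (hout i ?_)
    by_contra! h
    exact hW (Finset.mem_map.mpr
      ⟨(i - lo).toNat, Finset.mem_range.mpr (by omega),
        show lo + ((i - lo).toNat : ℤ) = i by omega⟩)
  rw [Finsupp.sum, ← finsum_eq_sum_of_support_subset _ (fun i hi => ?_),
    finsum_eq_sum_of_support_subset _ hsupp, Finset.sum_map]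
  · rfl
  · by_contra h
    exact hi (by simp [Finsupp.notMem_support_iff.mp h, hF])

lemma sum_mul_ite_add_eq {R : Type*} [Semiring R] (g : ℤ →₀ R) (w : ℤ → R) (n k : ℤ) :
    (g.sum fun m b => b * if n + m = k then w m else 0) = g (k - n) * w (k - n) := by
  rw [Finsupp.sum, Finset.sum_eq_single (k - n)]
  · simp
  · intro m _ hm
    simp [show n + m ≠ k by omega]
  · intro h
    simp [Finsupp.notMem_support_iff.mp h]

section degree
variable {M : Type*} [Zero M] {f : ℤ →₀ M} {k : ℤ}

def maxDeg (f : ℤ →₀ M) : ℤ := if h : f.support.Nonempty then f.support.max' h else 0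

def minDeg (f : ℤ →₀ M) : ℤ := if h : f.support.Nonempty then f.support.min' h else 0

lemma apply_maxDeg_ne_zero (hf : f ≠ 0) : f (maxDeg f) ≠ 0 := by
  have h := Finsupp.support_nonempty_iff.mpr hf
  simpa [maxDeg, h] using f.support.max'_mem h

lemma apply_minDeg_ne_zero (hf : f ≠ 0) : f (minDeg f) ≠ 0 := by
  have h := Finsupp.support_nonempty_iff.mpr hf
  simpa [minDeg, h] using f.support.min'_mem h

lemma apply_eq_zero_of_maxDeg_lt (hk : maxDeg f < k) : f k = 0 := by
  by_contra h
  have hs : f.support.Nonempty := ⟨k, Finsupp.mem_support_iff.mpr h⟩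
  simp only [maxDeg, hs, dite_true] at hk
  exact hk.not_ge (f.support.le_max' k (Finsupp.mem_support_iff.mpr h))

lemma apply_eq_zero_of_lt_minDeg (hk : k < minDeg f) : f k = 0 := by
  by_contra h
  have hs : f.support.Nonempty := ⟨k, Finsupp.mem_support_iff.mpr h⟩
  simp only [minDeg, hs, dite_true] at hk
  exact hk.not_ge (f.support.min'_le k (Finsupp.mem_support_iff.mpr h))

lemma minDeg_le_maxDeg (hf : f ≠ 0) : minDeg f ≤ maxDeg f := by
  by_contra! h
  exact apply_minDeg_ne_zero hf (apply_eq_zero_of_maxDeg_lt h)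

lemma minDeg_eq_of_apply_ne_zero (hk : f k ≠ 0) (hlt : ∀ j < k, f j = 0) : minDeg f = k := by
  refine le_antisymm ?_ ?_
  · by_contra! h
    exact hk (apply_eq_zero_of_lt_minDeg h)
  · by_contra! h
    have hf : f ≠ 0 := fun hf => hk (by simp [hf])
    exact apply_minDeg_ne_zero hf (hlt _ h)

lemma maxDeg_neg {G : Type*} [AddGroup G] (f : ℤ →₀ G) : maxDeg (-f) = maxDeg f := by
  simp [maxDeg, Finsupp.support_neg]

end degree
end Finsupp

namespace Module.Basis
open Finsupp

section span
variable {ι K : Type*} [Field K] (b : Module.Basis ι K (ℤ →₀ K))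

lemma apply_eq_sum_repr (v : ℤ →₀ K) (k : ℤ) :
    v k = ∑ i ∈ (b.repr v).support, b.repr v i * b i k := by
  conv_lhs => rw [← b.linearCombination_repr v]
  simp [Finsupp.linearCombination_apply, Finsupp.sum]

lemma exists_le_maxDeg (k : ℤ) : ∃ i, k ≤ maxDeg (b i) := by
  by_contra! h
  have := b.apply_eq_sum_repr (Finsupp.single k 1) k
  simp [apply_eq_zero_of_maxDeg_lt (h _)] at this

lemma exists_maxDeg_eq (k : ℤ)
    (hinj : Set.InjOn (maxDeg ∘ b) (b.repr (Finsupp.single k 1)).support) :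
    ∃ i ∈ (b.repr (Finsupp.single k 1)).support,
      maxDeg (b i) = k ∧ ∀ j ∈ (b.repr (Finsupp.single k 1)).support, maxDeg (b j) ≤ k := by
  set c := b.repr (Finsupp.single k 1)
  have hc : c.support.Nonempty := by simp [c]
  obtain ⟨i, hi, hmax⟩ := c.support.exists_max_image (maxDeg ∘ b) hc
  have hval := b.apply_eq_sum_repr (Finsupp.single k 1) (maxDeg (b i))
  rw [Finset.sum_eq_single_of_mem i hi fun j hj hji => ?_] at hval
  · have hik : maxDeg (b i) = k := by
      by_contra h
      rw [Finsupp.single_apply, if_neg (Ne.symm h)] at hval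
      exact mul_ne_zero (Finsupp.mem_support_iff.mp hi) (apply_maxDeg_ne_zero (b.ne_zero i))
        hval.symm
    exact ⟨i, hi, hik, fun j hj => hik ▸ hmax j hj⟩
  · have hlt : maxDeg (b j) < maxDeg (b i) :=
      lt_of_le_of_ne (hmax j hj) fun h => hji (hinj hj hi h)
    rw [apply_eq_zero_of_maxDeg_lt hlt, mul_zero]

lemma exists_minDeg_eq (k : ℤ)
    (hinj : Set.InjOn (minDeg ∘ b) (b.repr (Finsupp.single k 1)).support) :
    ∃ i ∈ (b.repr (Finsupp.single k 1)).support, minDeg (b i) = k := by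
  set c := b.repr (Finsupp.single k 1)
  have hc : c.support.Nonempty := by simp [c]
  obtain ⟨i, hi, hmin⟩ := c.support.exists_min_image (minDeg ∘ b) hc
  have hval := b.apply_eq_sum_repr (Finsupp.single k 1) (minDeg (b i))
  rw [Finset.sum_eq_single_of_mem i hi fun j hj hji => ?_] at hval
  · refine ⟨i, hi, by_contra fun h => ?_⟩
    rw [Finsupp.single_apply, if_neg (Ne.symm h)] at hval
    exact mul_ne_zero (Finsupp.mem_support_iff.mp hi) (apply_minDeg_ne_zero (b.ne_zero i))
      hval.symm
  · have hlt : minDeg (b i) < minDeg (b j) :=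
      lt_of_le_of_ne (hmin j hj) fun h => hji (hinj hj hi h.symm)
    rw [apply_eq_zero_of_lt_minDeg hlt, mul_zero]

end span
end Module.Basis

open Finsupp

namespace Witt

lemma exists_eq_mul_of_add_eq_add {γ : ℤ → ℤ} {N : ℤ} (hN : N ≤ 0)
    (hlt : ∀ m ≤ N, γ m < m)
    (hadd : ∀ n ≤ N, ∀ m ≤ N, γ n ≠ γ m → γ (n + m) = γ n + γ m) :
    ∃ q, ∀ m ≤ N, γ m = q * m := by
  -- a third index `k` far below separates colliding values
  have hadd' : ∀ n ≤ N, ∀ m ≤ N, γ (n + m) = γ n + γ m := by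
    intro n hn m hm
    set k := min (n + m) (min (γ n) (min (γ (n + m)) (γ m - γ n))) - 1
    have hk := hlt k (by omega)
    have h₁ := hadd n hn k (by omega) (by omega)
    have h₂ := hadd (n + k) (by omega) m hm (by omega)
    have h₃ := hadd k (by omega) (n + m) (by omega) (by omega)
    rw [show n + k + m = k + (n + m) by ring] at h₂
    omega
  have hstep : ∀ m ≤ N, γ (m - 1) = γ m - (γ N - γ (N - 1)) := by
    intro m hm
    have h₁ := hadd' (m - 1) (by omega) N le_rfl
    have h₂ := hadd' m hm (N - 1) (by omega)
    rw [show m - 1 + N = m + (N - 1) by ring] at h₁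
    omega
  have haff : ∀ m ≤ N, γ m = γ N + (γ N - γ (N - 1)) * (m - N) := by
    intro m hm
    induction m, hm using Int.leInductionDown with
    | base => ring
    | pred m hm ih => rw [hstep m hm, ih]; ring
  refine ⟨γ N - γ (N - 1), fun m hm => ?_⟩
  have h₂N := hadd' N le_rfl N le_rfl
  rw [haff (N + N) (by omega)] at h₂N
  rw [haff m hm]
  linear_combination -h₂N

variable {e₁ e₂ : ℂ}

def κ₂ (n m : ℤ) : ℤ :=
  if Odd n then (if Odd m then 0 else m - n - 1)
  else (if Odd m then m - n + 1 else m - n)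

def κ₄ (n m : ℤ) : ℤ :=
  if Odd n then (if Odd m then 0 else m - n - 2)
  else (if Odd m then m - n + 2 else m - n)

def c₄ (e₁ e₂ : ℂ) : ℂ := (e₁ - e₂) * (e₁ - -(e₁ + e₂))

lemma Vbr_eq (e₁ e₂ : ℂ) (n m : ℤ) :
    Vbr e₁ e₂ n m = ((m - n : ℤ) : ℂ) • Finsupp.single (n + m) 1
      + (3 * e₁ * κ₂ n m) • Finsupp.single (n + m - 2) 1
      + (c₄ e₁ e₂ * κ₄ n m) • Finsupp.single (n + m - 4) 1 := by
  by_cases hn : Odd n <;> by_cases hm : Odd m <;>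
    simp only [Vbr, VbrOE, κ₂, κ₄, c₄, hn, hm, if_true, if_false, add_comm m n] <;>
    push_cast <;> module

lemma ne_zero_of_c₄_eq_zero (h : (e₁, e₂) ≠ (0, 0)) (hC : c₄ e₁ e₂ = 0) :
    e₁ ≠ 0 := by
  rintro rfl
  simp_all [c₄]

lemma sub_one_le_or_odd_of_κ₂_eq_zero {n m : ℤ} (h : κ₂ n m = 0) :
    n - 1 ≤ m ∨ (Odd n ∧ Odd m) := by
  unfold κ₂ at h
  split_ifs at h with hn hm hm <;> simp only [Int.odd_iff] at hn hm ⊢ <;> omega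

lemma eq_or_odd_of_κ₄_eq_zero {n m : ℤ} (h : κ₄ n m = 0) : n = m ∨ (Odd n ∧ Odd m) := by
  unfold κ₄ at h
  split_ifs at h with hn hm hm <;> simp only [Int.odd_iff] at hn hm ⊢ <;> omega

lemma Lbr_apply (f g : ℤ →₀ ℂ) (k : ℤ) :
    Lbr e₁ e₂ f g k = f.sum fun n a => a *
      (g (k - n) * ((k - n - n : ℤ) : ℂ) + g (k + 2 - n) * (3 * e₁ * κ₂ n (k + 2 - n))
        + g (k + 4 - n) * (c₄ e₁ e₂ * κ₄ n (k + 4 - n))) := by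
  simp only [Lbr, Finsupp.sum_apply, Finsupp.smul_apply, smul_eq_mul, Vbr_eq, Finsupp.add_apply,
    Finsupp.single_apply, mul_one, mul_ite, mul_zero]
  refine Finsupp.sum_congr fun n _ => ?_
  have e2 : ∀ m, (n + m - 2 = k) = (n + m = k + 2) := fun m => propext (by omega)
  have e4 : ∀ m, (n + m - 4 = k) = (n + m = k + 4) := fun m => propext (by omega)
  simp only [e2, e4, mul_assoc, ← Finsupp.mul_sum, mul_add, Finsupp.sum_add, sum_mul_ite_add_eq]

section bottom
variable {f g : ℤ →₀ ℂ} {bf bg : ℤ} (hf : ∀ j < bf, f j = 0) (hg : ∀ j < bg, g j = 0)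
include hf hg

lemma Lbr_apply_bot_add (i : ℕ) :
    Lbr e₁ e₂ f g (bf + bg - 4 + i) = ∑ a ∈ Finset.range (i + 1), f (bf + a) *
      (g (bg + (i - 4 - a)) * ((bg + (i - 4 - a) - (bf + a) : ℤ) : ℂ)
        + g (bg + (i - 2 - a)) * (3 * e₁ * κ₂ (bf + a) (bg + (i - 2 - a)))
        + g (bg + (i - a)) * (c₄ e₁ e₂ * κ₄ (bf + a) (bg + (i - a)))) := by
  rw [Lbr_apply, sum_eq_sum_range_add _ _ bf (i + 1) (by simp)]
  · refine Finset.sum_congr rfl fun a _ => ?_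
    rw [show bf + bg - 4 + i - (bf + a) = bg + (i - 4 - a) by ring,
      show bf + bg - 4 + i + 2 - (bf + a) = bg + (i - 2 - a) by ring,
      show bf + bg - 4 + i + 4 - (bf + a) = bg + (i - a) by ring]
  · rintro n (hn | hn)
    · simp [hf n hn]
    · push_cast at hn
      simp [hg (bf + bg - 4 + i - n) (by omega), hg (bf + bg - 4 + i + 2 - n) (by omega),
        hg (bf + bg - 4 + i + 4 - n) (by omega)]

lemma Lbr_apply_eq_zero_of_lt_bot {k : ℤ} (hk : k < bf + bg - 4) : Lbr e₁ e₂ f g k = 0 := by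
  rw [Lbr_apply, Finsupp.sum]
  refine Finset.sum_eq_zero fun n _ => ?_
  rcases lt_or_ge n bf with hn | hn
  · simp [hf n hn]
  · simp [hg (k - n) (by omega), hg (k + 2 - n) (by omega), hg (k + 4 - n) (by omega)]

lemma Lbr_apply_bot :
    Lbr e₁ e₂ f g (bf + bg - 4) = f bf * g bg * (c₄ e₁ e₂ * κ₄ bf bg) := by
  have hg' : ∀ j < 0, g (bg + j) = 0 := fun j hj => hg _ (by omega)
  simpa [hg', mul_assoc] using Lbr_apply_bot_add (e₁ := e₁) (e₂ := e₂) hf hg 0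

lemma Lbr_apply_bot_add_two_of_c₄_eq_zero (h : c₄ e₁ e₂ = 0) :
    Lbr e₁ e₂ f g (bf + bg - 2) = f bf * g bg * (3 * e₁ * κ₂ bf bg) := by
  have hg' : ∀ j < 0, g (bg + j) = 0 := fun j hj => hg _ (by omega)
  have := Lbr_apply_bot_add (e₁ := e₁) (e₂ := e₂) hf hg 2
  simp [Finset.sum_range_succ, hg', h] at this
  rw [show bf + bg - 2 = bf + bg - 4 + 2 by ring, this]
  ring

section odd
variable (hbf : Odd bf) (hbg : Odd bg)
include hbf hbg

lemma Lbr_apply_bot_add_one_of_odd :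
    Lbr e₁ e₂ f g (bf + bg - 3) = c₄ e₁ e₂ *
      ((bg - bf - 1) * f bf * g (bg + 1) + (bg - bf + 1) * f (bf + 1) * g bg) := by
  have hg' : ∀ j < 0, g (bg + j) = 0 := fun j hj => hg _ (by omega)
  have hbf' := Int.not_even_iff_odd.mpr hbf
  have hbg' := Int.not_even_iff_odd.mpr hbg
  have := Lbr_apply_bot_add (e₁ := e₁) (e₂ := e₂) hf hg 1
  simp +decide [Finset.sum_range_succ, hg', κ₂, κ₄, hbf', hbg', ← Int.not_even_iff_odd,
    parity_simps] at this
  rw [show bf + bg - 3 = bf + bg - 4 + 1 by ring, this]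
  ring

lemma Lbr_apply_bot_add_two_of_odd :
    Lbr e₁ e₂ f g (bf + bg - 2) = c₄ e₁ e₂ * (bg - bf) * f (bf + 1) * g (bg + 1) := by
  have hg' : ∀ j < 0, g (bg + j) = 0 := fun j hj => hg _ (by omega)
  have hbf' := Int.not_even_iff_odd.mpr hbf
  have hbg' := Int.not_even_iff_odd.mpr hbg
  have := Lbr_apply_bot_add (e₁ := e₁) (e₂ := e₂) hf hg 2
  simp +decide [Finset.sum_range_succ, hg', κ₂, κ₄, hbf', hbg', ← Int.not_even_iff_odd,
    parity_simps] at this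
  rw [show bf + bg - 2 = bf + bg - 4 + 2 by ring, this]
  ring

lemma Lbr_apply_bot_add_three_of_odd :
    Lbr e₁ e₂ f g (bf + bg - 1) = 3 * e₁ * (bg - bf) * (f bf * g (bg + 1) + f (bf + 1) * g bg)
      + c₄ e₁ e₂ * ((bg - bf + 1) * f bf * g (bg + 3)
        + (bg - bf + 3) * f (bf + 1) * g (bg + 2) + (bg - bf - 3) * f (bf + 2) * g (bg + 1)
        + (bg - bf - 1) * f (bf + 3) * g bg) := by
  have hg' : ∀ j < 0, g (bg + j) = 0 := fun j hj => hg _ (by omega)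
  have hbf' := Int.not_even_iff_odd.mpr hbf
  have hbg' := Int.not_even_iff_odd.mpr hbg
  have := Lbr_apply_bot_add (e₁ := e₁) (e₂ := e₂) hf hg 3
  simp +decide [Finset.sum_range_succ, hg', κ₂, κ₄, hbf', hbg', ← Int.not_even_iff_odd,
    parity_simps] at this
  rw [show bf + bg - 1 = bf + bg - 4 + 3 by ring, this]
  ring

lemma Lbr_apply_bot_add_four_of_odd :
    Lbr e₁ e₂ f g (bf + bg) = (bg - bf) * (f bf * g bg + 3 * e₁ * f (bf + 1) * g (bg + 1))
      + c₄ e₁ e₂ * ((bg - bf + 2) * f (bf + 1) * g (bg + 3)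
        + (bg - bf - 2) * f (bf + 3) * g (bg + 1)) := by
  have hg' : ∀ j < 0, g (bg + j) = 0 := fun j hj => hg _ (by omega)
  have hbf' := Int.not_even_iff_odd.mpr hbf
  have hbg' := Int.not_even_iff_odd.mpr hbg
  have := Lbr_apply_bot_add (e₁ := e₁) (e₂ := e₂) hf hg 4
  simp +decide [Finset.sum_range_succ, hg', κ₂, κ₄, hbf', hbg', ← Int.not_even_iff_odd,
    parity_simps] at this
  rw [this]
  ring

lemma Lbr_apply_eq_zero_of_lt_bot_add_three (hC : c₄ e₁ e₂ = 0) {k : ℤ}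
    (hk : k < bf + bg - 1) : Lbr e₁ e₂ f g k = 0 := by
  obtain h | rfl | rfl | rfl :
      k < bf + bg - 4 ∨ k = bf + bg - 4 ∨ k = bf + bg - 3 ∨ k = bf + bg - 2 := by omega
  · exact Lbr_apply_eq_zero_of_lt_bot hf hg h
  · simp [Lbr_apply_bot hf hg, hC]
  · simp [Lbr_apply_bot_add_one_of_odd hf hg hbf hbg, hC]
  · simp [Lbr_apply_bot_add_two_of_odd hf hg hbf hbg, hC]

end odd
end bottom

section top
variable {f g : ℤ →₀ ℂ} {df dg : ℤ} (hf : ∀ j, df < j → f j = 0)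
  (hg : ∀ j, dg < j → g j = 0)
include hf hg

lemma Lbr_apply_eq_zero_of_top_lt {k : ℤ} (hk : df + dg < k) : Lbr e₁ e₂ f g k = 0 := by
  rw [Lbr_apply, Finsupp.sum]
  refine Finset.sum_eq_zero fun n _ => ?_
  rcases lt_or_ge df n with hn | hn
  · simp [hf n hn]
  · simp [hg (k - n) (by omega), hg (k + 2 - n) (by omega), hg (k + 4 - n) (by omega)]

lemma Lbr_apply_top : Lbr e₁ e₂ f g (df + dg) = f df * g dg * (dg - df) := by
  rw [Lbr_apply, Finsupp.sum_eq_single df]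
  · simp [hg (df + dg + 2 - df) (by omega), hg (df + dg + 4 - df) (by omega)]
    ring
  · intro n _ hn
    rcases lt_or_gt_of_ne hn with hn | hn
    · simp [hg (df + dg - n) (by omega), hg (df + dg + 2 - n) (by omega),
        hg (df + dg + 4 - n) (by omega)]
    · simp [hf n hn]
  · simp

end top

lemma Lbr_neg_neg (f g : ℤ →₀ ℂ) : Lbr e₁ e₂ (-f) (-g) = Lbr e₁ e₂ f g := by
  simp [Lbr, Finsupp.sum_neg_index, Finsupp.sum_neg]

def IsWittBasis (e₁ e₂ : ℂ) (b : Module.Basis ℤ ℂ (ℤ →₀ ℂ)) : Prop :=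
  ∀ n m, Lbr e₁ e₂ (b n) (b m) = ((m - n : ℤ) : ℂ) • b (n + m)

lemma minDeg_apply_le {b : Module.Basis ℤ ℂ (ℤ →₀ ℂ)} (hdeg : ∀ m, maxDeg (b m) = m)
    (m : ℤ) : minDeg (b m) ≤ m :=
  (minDeg_le_maxDeg (b.ne_zero m)).trans_eq (hdeg m)

lemma minDeg_zero_le_neg_one {b : Module.Basis ℤ ℂ (ℤ →₀ ℂ)}
    (hdeg : ∀ m, maxDeg (b m) = m) (hr : Odd (minDeg (b 0))) : minDeg (b 0) ≤ -1 := by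
  have := minDeg_apply_le hdeg 0
  have := Int.odd_iff.mp hr
  omega

namespace IsWittBasis
variable {b : Module.Basis ℤ ℂ (ℤ →₀ ℂ)} (hb : IsWittBasis e₁ e₂ b)
include hb

lemma Lbr_apply (n m k : ℤ) : Lbr e₁ e₂ (b n) (b m) k = (m - n) * b (n + m) k := by
  simp [hb n m]

lemma Lbr_zero_apply (m k : ℤ) : Lbr e₁ e₂ (b 0) (b m) k = m * b m k := by
  simp [hb.Lbr_apply]

lemma neg_reindex :
    IsWittBasis e₁ e₂ ((b.reindex (Equiv.neg ℤ)).map (LinearEquiv.neg ℂ)) := by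
  intro n m
  simp only [Module.Basis.map_apply, Module.Basis.reindex_apply, Equiv.neg_symm, Equiv.neg_apply,
    LinearEquiv.neg_apply, Lbr_neg_neg, hb (-n) (-m), neg_add, smul_neg, ← neg_smul]
  congr 1
  push_cast
  ring

lemma top_coeff_eq (m : ℤ) :
    b 0 (maxDeg (b 0)) * b m (maxDeg (b m)) * (maxDeg (b m) - maxDeg (b 0))
      = m * b m (maxDeg (b 0) + maxDeg (b m)) := by
  rw [← hb.Lbr_zero_apply, Lbr_apply_top (fun j => apply_eq_zero_of_maxDeg_lt)
    (fun j => apply_eq_zero_of_maxDeg_lt)]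

lemma maxDeg_zero : maxDeg (b 0) = 0 := by
  rcases lt_trichotomy (maxDeg (b 0)) 0 with hp | hp | hp
  · have h := hb.Lbr_zero_apply 1 (maxDeg (b 1))
    rw [Lbr_apply_eq_zero_of_top_lt (fun j => apply_eq_zero_of_maxDeg_lt)
      (fun j => apply_eq_zero_of_maxDeg_lt) (by omega)] at h
    exact absurd (by simpa using h.symm) (apply_maxDeg_ne_zero (b.ne_zero 1))
  · exact hp
  · have hconst : ∀ m, maxDeg (b m) = maxDeg (b 0) := by
      intro m
      have h := hb.top_coeff_eq m
      rw [apply_eq_zero_of_maxDeg_lt (f := b m) (k := maxDeg (b 0) + maxDeg (b m)) (by omega),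
        mul_zero] at h
      simpa [sub_eq_zero, apply_maxDeg_ne_zero (b.ne_zero _)] using h
    obtain ⟨m, hm⟩ := b.exists_le_maxDeg (maxDeg (b 0) + 1)
    linarith [hconst m]

lemma apply_zero_zero_mul_maxDeg (m : ℤ) : b 0 0 * maxDeg (b m) = m := by
  have h := hb.top_coeff_eq m
  rw [hb.maxDeg_zero, zero_add, Int.cast_zero, sub_zero] at h
  exact mul_right_cancel₀ (apply_maxDeg_ne_zero (b.ne_zero m)) (by linear_combination h)

lemma exists_maxDeg_eq_self :
    ∃ b' : Module.Basis ℤ ℂ (ℤ →₀ ℂ),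
      IsWittBasis e₁ e₂ b' ∧ ∀ m, maxDeg (b' m) = m := by
  obtain ⟨δ, hδ1⟩ : ∃ δ, maxDeg (b 1) = δ := ⟨_, rfl⟩
  have h₁ := hb.apply_zero_zero_mul_maxDeg 1
  rw [hδ1, Int.cast_one] at h₁
  have hδ : ∀ m, maxDeg (b m) = m * δ := by
    intro m
    have h := hb.apply_zero_zero_mul_maxDeg m
    have : (maxDeg (b m) : ℂ) = (m * δ : ℤ) := by
      push_cast
      linear_combination δ * h - (maxDeg (b m) : ℂ) * h₁
    exact_mod_cast this
  have hδ0 : δ ≠ 0 := fun h => by simp [h] at h₁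
  obtain ⟨m, -, hm, -⟩ := b.exists_maxDeg_eq 1 fun i _ j _ hij => by
    simpa [hδ, hδ0] using hij
  have hδm : δ * m = 1 := by rw [← hm, hδ, mul_comm]
  rcases Int.eq_one_or_neg_one_of_mul_eq_one hδm with h | h
  · exact ⟨b, hb, fun m => by simp [hδ, h]⟩
  · exact ⟨_, hb.neg_reindex, fun m => by simp [maxDeg_neg, hδ, h]⟩

lemma Lbr_zero_apply_eq_zero_of_lt_minDeg {m k : ℤ} (hk : k < minDeg (b m)) :
    Lbr e₁ e₂ (b 0) (b m) k = 0 := by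
  rw [hb.Lbr_zero_apply, apply_eq_zero_of_lt_minDeg hk, mul_zero]

section bottom
variable (hdeg : ∀ m, maxDeg (b m) = m)
include hdeg

lemma minDeg_ge_or_odd (h : (e₁, e₂) ≠ (0, 0)) (m : ℤ) :
    minDeg (b 0) - 1 ≤ minDeg (b m) ∨ (Odd (minDeg (b 0)) ∧ Odd (minDeg (b m))) := by
  have hr := minDeg_apply_le hdeg 0
  have ht := apply_minDeg_ne_zero (b.ne_zero 0)
  have hg := apply_minDeg_ne_zero (b.ne_zero m)
  by_cases hC : c₄ e₁ e₂ = 0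
  · have h₂ := Lbr_apply_bot_add_two_of_c₄_eq_zero (e₁ := e₁) (f := b 0) (g := b m)
      (fun _ => apply_eq_zero_of_lt_minDeg) (fun _ => apply_eq_zero_of_lt_minDeg) hC
    rw [hb.Lbr_zero_apply_eq_zero_of_lt_minDeg (by omega)] at h₂
    refine sub_one_le_or_odd_of_κ₂_eq_zero ?_
    simpa [ht, hg, ne_zero_of_c₄_eq_zero h hC] using h₂.symm
  · have h₀ := Lbr_apply_bot (e₁ := e₁) (e₂ := e₂) (f := b 0) (g := b m)
      (fun _ => apply_eq_zero_of_lt_minDeg) (fun _ => apply_eq_zero_of_lt_minDeg)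
    rw [hb.Lbr_zero_apply_eq_zero_of_lt_minDeg (by omega)] at h₀
    rcases eq_or_odd_of_κ₄_eq_zero (by simpa [ht, hg, hC] using h₀.symm) with h' | h'
    · exact Or.inl (by omega)
    · exact Or.inr h'

lemma odd_minDeg_zero (h : (e₁, e₂) ≠ (0, 0)) : Odd (minDeg (b 0)) := by
  have := minDeg_apply_le hdeg (minDeg (b 0) - 2)
  rcases hb.minDeg_ge_or_odd hdeg h (minDeg (b 0) - 2) with h' | h'
  · omega
  · exact h'.1

lemma odd_minDeg_of_le (h : (e₁, e₂) ≠ (0, 0)) {m : ℤ} (hm : m ≤ minDeg (b 0) - 2) :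
    Odd (minDeg (b m)) := by
  have := minDeg_apply_le hdeg m
  rcases hb.minDeg_ge_or_odd hdeg h m with h' | h'
  · omega
  · exact h'.2

lemma minDeg_eq_minDeg_zero_of_odd (hC : c₄ e₁ e₂ ≠ 0) (hr : Odd (minDeg (b 0))) {m : ℤ}
    (hm : Odd (minDeg (b m))) : minDeg (b m) = minDeg (b 0) := by
  set r := minDeg (b 0)
  set β := minDeg (b m)
  have hr0 := minDeg_zero_le_neg_one hdeg hr
  have hf : ∀ j < r, b 0 j = 0 := fun _ => apply_eq_zero_of_lt_minDeg
  have hg : ∀ j < β, b m j = 0 := fun _ => apply_eq_zero_of_lt_minDeg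
  have e₁' := Lbr_apply_bot_add_one_of_odd (e₁ := e₁) (e₂ := e₂) hf hg hr hm
  have e₂' := Lbr_apply_bot_add_two_of_odd (e₁ := e₁) (e₂ := e₂) hf hg hr hm
  have e₄' := Lbr_apply_bot_add_four_of_odd (e₁ := e₁) (e₂ := e₂) hf hg hr hm
  rw [hb.Lbr_zero_apply_eq_zero_of_lt_minDeg (by omega)] at e₁' e₂' e₄'
  by_contra hne
  have ht : b 0 r ≠ 0 := apply_minDeg_ne_zero (b.ne_zero 0)
  have hg₀ : b m β ≠ 0 := apply_minDeg_ne_zero (b.ne_zero m)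
  have hpar := Int.odd_iff.mp hr
  have hpar' := Int.odd_iff.mp hm
  have hd : (β : ℂ) - r ≠ 0 := by exact_mod_cast (show β - r ≠ 0 by omega)
  have hd₁ : (β : ℂ) - r + 1 ≠ 0 := by exact_mod_cast (show β - r + 1 ≠ 0 by omega)
  have hd₂ : (β : ℂ) - r - 1 ≠ 0 := by exact_mod_cast (show β - r - 1 ≠ 0 by omega)
  have hq : b 0 (r + 1) = 0 := by
    have : c₄ e₁ e₂ * (β - r) * (β - r + 1) * b m β * b 0 (r + 1) ^ 2 = 0 := by
      linear_combination
        (((β : ℂ) - r - 1) * b 0 r) * e₂' - (((β : ℂ) - r) * b 0 (r + 1)) * e₁'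
    simpa [hC, hd, hd₁, hg₀] using this
  have hg₁ : b m (β + 1) = 0 := by
    rw [hq] at e₁'
    simpa [hC, hd₂, ht] using e₁'
  rw [hq, hg₁] at e₄'
  simp [hd, ht, hg₀] at e₄'

section degenerate
variable (h : (e₁, e₂) ≠ (0, 0)) (hC : c₄ e₁ e₂ = 0)
include h hC

lemma bottom_coeff_relations {m : ℤ} (hm : m ≤ minDeg (b 0) - 2) :
    b 0 (minDeg (b 0)) * b m (minDeg (b m) + 1)
        + b 0 (minDeg (b 0) + 1) * b m (minDeg (b m)) = 0 ∧
      b 0 (minDeg (b 0)) * b m (minDeg (b m))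
        + 3 * e₁ * b 0 (minDeg (b 0) + 1) * b m (minDeg (b m) + 1) = 0 := by
  have hr := hb.odd_minDeg_zero hdeg h
  have hβ := hb.odd_minDeg_of_le hdeg h hm
  have hβr := (minDeg_apply_le hdeg m).trans hm
  have hr0 := minDeg_zero_le_neg_one hdeg hr
  have hf : ∀ j < minDeg (b 0), b 0 j = 0 := fun _ => apply_eq_zero_of_lt_minDeg
  have hg : ∀ j < minDeg (b m), b m j = 0 := fun _ => apply_eq_zero_of_lt_minDeg
  have e₃ := Lbr_apply_bot_add_three_of_odd (e₁ := e₁) (e₂ := e₂) hf hg hr hβ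
  have e₄ := Lbr_apply_bot_add_four_of_odd (e₁ := e₁) (e₂ := e₂) hf hg hr hβ
  rw [hb.Lbr_zero_apply_eq_zero_of_lt_minDeg (by omega)] at e₃ e₄
  have hd : (minDeg (b m) : ℂ) - minDeg (b 0) ≠ 0 := by
    exact_mod_cast (show minDeg (b m) - minDeg (b 0) ≠ 0 by omega)
  constructor
  · simpa [hC, hd, ne_zero_of_c₄_eq_zero h hC, eq_comm] using e₃
  · simpa [hC, hd, eq_comm, mul_assoc] using e₄

lemma apply_minDeg_zero_add_one_ne_zero : b 0 (minDeg (b 0) + 1) ≠ 0 := by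
  intro hq
  have h₂ := (hb.bottom_coeff_relations hdeg h hC (m := minDeg (b 0) - 2) le_rfl).2
  simp [hq, apply_minDeg_ne_zero (b.ne_zero _)] at h₂

lemma bottom_pair_coeff_ne_zero {n m : ℤ} (hn : n ≤ minDeg (b 0) - 2)
    (hm : m ≤ minDeg (b 0) - 2) :
    b n (minDeg (b n)) * b m (minDeg (b m) + 1) + b n (minDeg (b n) + 1) * b m (minDeg (b m))
      ≠ 0 := by
  intro h0
  have hn₁ := (hb.bottom_coeff_relations hdeg h hC hn).1
  have hm₁ := (hb.bottom_coeff_relations hdeg h hC hm).1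
  have : 2 * b 0 (minDeg (b 0) + 1) * b n (minDeg (b n)) * b m (minDeg (b m)) = 0 := by
    linear_combination b n (minDeg (b n)) * hm₁ + b m (minDeg (b m)) * hn₁
      - b 0 (minDeg (b 0)) * h0
  simp [hb.apply_minDeg_zero_add_one_ne_zero hdeg h hC, apply_minDeg_ne_zero (b.ne_zero _)] at this

lemma minDeg_add {n m : ℤ} (hn : n ≤ minDeg (b 0) - 2) (hm : m ≤ minDeg (b 0) - 2)
    (hne : minDeg (b n) ≠ minDeg (b m)) :
    minDeg (b (n + m)) = minDeg (b n) + minDeg (b m) - 1 := by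
  have hβn := hb.odd_minDeg_of_le hdeg h hn
  have hβm := hb.odd_minDeg_of_le hdeg h hm
  have hf : ∀ j < minDeg (b n), b n j = 0 := fun _ => apply_eq_zero_of_lt_minDeg
  have hg : ∀ j < minDeg (b m), b m j = 0 := fun _ => apply_eq_zero_of_lt_minDeg
  have hnm : (m : ℂ) - n ≠ 0 := by
    exact_mod_cast sub_ne_zero.mpr fun hmn => hne (by rw [hmn])
  apply minDeg_eq_of_apply_ne_zero
  · intro h0
    have e₃ := Lbr_apply_bot_add_three_of_odd (e₁ := e₁) (e₂ := e₂) hf hg hβn hβm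
    rw [hb.Lbr_apply, h0, mul_zero] at e₃
    have hd : (minDeg (b m) : ℂ) - minDeg (b n) ≠ 0 := by
      exact_mod_cast sub_ne_zero.mpr (Ne.symm hne)
    simp [hC, hd, ne_zero_of_c₄_eq_zero h hC,
      hb.bottom_pair_coeff_ne_zero hdeg h hC hn hm] at e₃
  · intro j hj
    have e := hb.Lbr_apply n m j
    rw [Lbr_apply_eq_zero_of_lt_bot_add_three hf hg hβn hβm hC hj] at e
    simpa [hnm] using e.symm

lemma exists_minDeg_eq_mul_add_one :
    ∃ q, 2 ≤ q ∧ ∀ m ≤ minDeg (b 0) - 2, minDeg (b m) = q * m + 1 := by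
  set N := minDeg (b 0) - 2
  have hN : N ≤ -3 := by
    have := minDeg_zero_le_neg_one hdeg (hb.odd_minDeg_zero hdeg h)
    omega
  obtain ⟨q, hq⟩ := exists_eq_mul_of_add_eq_add (γ := fun m => minDeg (b m) - 1) (N := N)
    (by omega) (fun m _ => by have := minDeg_apply_le hdeg m; omega)
    (fun n hn m hm hne => by
      rw [hb.minDeg_add hdeg h hC hn hm (by omega)]
      ring)
  refine ⟨q, ?_, fun m hm => by linarith [hq m hm]⟩
  have := hq N le_rfl
  have := minDeg_apply_le hdeg N
  nlinarith

lemma false_of_c₄_eq_zero : False := by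
  obtain ⟨q, hq₂, hq⟩ := hb.exists_minDeg_eq_mul_add_one hdeg h hC
  set N := minDeg (b 0) - 2
  have hN : N ≤ -3 := by
    have := minDeg_zero_le_neg_one hdeg (hb.odd_minDeg_zero hdeg h)
    omega
  obtain ⟨-, -, -, hsupp⟩ := b.exists_maxDeg_eq N fun i _ j _ hij => by simpa [hdeg] using hij
  obtain ⟨m, hm, hβm⟩ := b.exists_minDeg_eq N fun i hi j hj hij => by
    have := hq i (hdeg i ▸ hsupp i hi)
    have := hq j (hdeg j ▸ hsupp j hj)
    simp only [Function.comp_apply] at hij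
    exact mul_left_cancel₀ (show q ≠ 0 by omega) (by omega)
  have hmN := hdeg m ▸ hsupp m hm
  have := hq m hmN
  nlinarith

end degenerate

lemma false_of_maxDeg_eq (h : (e₁, e₂) ≠ (0, 0)) : False := by
  by_cases hC : c₄ e₁ e₂ = 0
  · exact hb.false_of_c₄_eq_zero hdeg h hC
  · have hr := hb.odd_minDeg_zero hdeg h
    have := hb.minDeg_eq_minDeg_zero_of_odd hdeg hC hr (hb.odd_minDeg_of_le hdeg h le_rfl)
    have := minDeg_apply_le hdeg (minDeg (b 0) - 2)
    omega

end bottom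
end IsWittBasis

theorem not_isWittBasis (h : (e₁, e₂) ≠ (0, 0)) (b : Module.Basis ℤ ℂ (ℤ →₀ ℂ)) :
    ¬ IsWittBasis e₁ e₂ b := fun hb => by
  obtain ⟨b', hb', hdeg⟩ := hb.exists_maxDeg_eq_self
  exact hb'.false_of_maxDeg_eq hdeg h

end Witt

/-- For every `(e₁,e₂) ∈ ℂ²` with `(e₁,e₂) ≠ (0,0)`, the Lie
algebra `L^(e₁,e₂)` is not isomorphic (as a complex Lie algebra) to the
Witt algebra `W`: no ℂ-linear equivalence intertwines the brackets. -/
theorem L_ne_zero_not_iso_Witt (e₁ e₂ : ℂ) (h : (e₁, e₂) ≠ (0, 0)) :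
    ¬ ∃ φ : (ℤ →₀ ℂ) ≃ₗ[ℂ] (ℤ →₀ ℂ),
        ∀ f g : ℤ →₀ ℂ, φ (Lbr e₁ e₂ f g) = Wbr (φ f) (φ g) := by
  rintro ⟨φ, hφ⟩
  refine Witt.not_isWittBasis h (Finsupp.basisSingleOne.map φ.symm) fun n m => φ.injective ?_
  simp [hφ, Wbr]
end

section
/- For every fixed s ∈ ℂ and every e₁ ∈ ℂ with e₁ ≠ 0, the Lie algebra L^(e₁, s·e₁) is isomorphic to L^(1, s); in particular, for any e₁, e₁' ≠ 0 the Lie algebras L^(e₁, s·e₁) and L^(e₁', s·e₁') are isomorphic (the family over the line D_s = {e₂ = s·e₁} is a jump deformation), an isomorphism being given by rescaling the basis elements Vₙ ↦ (√e₁)^{−n} Vₙ. -/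
open scoped Classical

/-! The bracket coefficient of `V_{n+m-2k}` in `[Vₙ,Vₘ]` is homogeneous of degree `k` in
`(e₁, e₂)`, while `Vₙ` has weight `n`. Hence rescaling `Vₙ ↦ r^(-n) Vₙ` carries
`L^(e₁,e₂)` isomorphically onto `L^(r²e₁, r²e₂)`. The first claim is the case
`(e₁, e₂) = (1, s)`, and the second takes `r² = e₁'/e₁`. -/

noncomputable def LbrBilin (e₁ e₂ : ℂ) : (ℤ →₀ ℂ) →ₗ[ℂ] (ℤ →₀ ℂ) →ₗ[ℂ] (ℤ →₀ ℂ) :=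
  Finsupp.linearCombination ℂ fun n => Finsupp.linearCombination ℂ (Vbr e₁ e₂ n)

theorem Lbr_eq_LbrBilin (e₁ e₂ : ℂ) (f g : ℤ →₀ ℂ) : Lbr e₁ e₂ f g = LbrBilin e₁ e₂ f g := by
  simp only [Lbr, LbrBilin, Finsupp.linearCombination_apply, Finsupp.sum, LinearMap.sum_apply,
    LinearMap.smul_apply, Finset.smul_sum, smul_smul]

theorem Lbr_single_single (e₁ e₂ : ℂ) (n m : ℤ) (a b : ℂ) :
    Lbr e₁ e₂ (Finsupp.single n a) (Finsupp.single m b) = (a * b) • Vbr e₁ e₂ n m := by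
  simp only [Lbr_eq_LbrBilin, LbrBilin, Finsupp.linearCombination_single, LinearMap.smul_apply,
    smul_smul]

theorem map_Lbr_of_map_Vbr {e₁ e₂ e₁' e₂' : ℂ} (φ : (ℤ →₀ ℂ) →ₗ[ℂ] (ℤ →₀ ℂ))
    (h : ∀ n m, φ (Vbr e₁ e₂ n m) =
      Lbr e₁' e₂' (φ (Finsupp.single n 1)) (φ (Finsupp.single m 1)))
    (f g : ℤ →₀ ℂ) : φ (Lbr e₁ e₂ f g) = Lbr e₁' e₂' (φ f) (φ g) := by
  have hB : (LbrBilin e₁ e₂).compr₂ φ = (LbrBilin e₁' e₂').compl₁₂ φ φ :=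
    Finsupp.lhom_ext' fun n => LinearMap.ext_ring <| Finsupp.lhom_ext' fun m =>
      LinearMap.ext_ring <| by simpa [Lbr_single_single, ← Lbr_eq_LbrBilin] using h n m
  simpa only [Lbr_eq_LbrBilin, LinearMap.compr₂_apply, LinearMap.compl₁₂_apply] using
    LinearMap.congr_fun₂ hB f g

noncomputable def rescale (r : ℂ) (hr : r ≠ 0) : (ℤ →₀ ℂ) ≃ₗ[ℂ] (ℤ →₀ ℂ) :=
  Finsupp.basisSingleOne.equiv
    (Finsupp.basisSingleOne.unitsSMul fun n => Units.mk0 r hr ^ (-n)) (Equiv.refl ℤ)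

theorem rescale_single {r : ℂ} (hr : r ≠ 0) (n : ℤ) :
    rescale r hr (Finsupp.single n 1) = r ^ (-n) • Finsupp.single n 1 := by
  simpa [rescale, Module.Basis.unitsSMul_apply, Units.smul_def] using
    Finsupp.basisSingleOne.equiv_apply n
      (Finsupp.basisSingleOne.unitsSMul fun n => Units.mk0 r hr ^ (-n)) (Equiv.refl ℤ)

theorem rescale_Vbr (e₁ e₂ : ℂ) {r : ℂ} (hr : r ≠ 0) (n m : ℤ) :
    rescale r hr (Vbr e₁ e₂ n m) =
      (r ^ (-n) * r ^ (-m)) • Vbr (r ^ 2 * e₁) (r ^ 2 * e₂) n m := by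
  have hpow : ∀ k : ℕ, r ^ (-(n + m - k)) = r ^ k * (r ^ (-n) * r ^ (-m)) := fun k => by
    rw [← zpow_natCast, ← zpow_add₀ hr, ← zpow_add₀ hr]
    ring_nf
  have h0 : r ^ (-(n + m)) = r ^ (-n) * r ^ (-m) := by simpa using hpow 0
  have h2 : r ^ (-(n + m - 2)) = r ^ 2 * (r ^ (-n) * r ^ (-m)) := by exact_mod_cast hpow 2
  have h4 : r ^ (-(n + m - 4)) = r ^ 4 * (r ^ (-n) * r ^ (-m)) := by exact_mod_cast hpow 4
  unfold Vbr VbrOE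
  split_ifs <;>
    simp only [map_add, map_smul, map_neg, rescale_single, smul_add, smul_neg, smul_smul,
      add_comm m n, h0, h2, h4] <;>
    match_scalars <;> ring

theorem rescale_Lbr (e₁ e₂ : ℂ) {r : ℂ} (hr : r ≠ 0) (f g : ℤ →₀ ℂ) :
    rescale r hr (Lbr e₁ e₂ f g) =
      Lbr (r ^ 2 * e₁) (r ^ 2 * e₂) (rescale r hr f) (rescale r hr g) :=
  map_Lbr_of_map_Vbr (rescale r hr).toLinearMap (fun n m => by
    simp only [LinearEquiv.coe_coe, rescale_single, rescale_Vbr, Finsupp.smul_single,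
      smul_eq_mul, mul_one, Lbr_single_single]) f g

/-- For fixed `s ∈ ℂ` and `e₁ ≠ 0`, the Lie algebra
`L^(e₁, s·e₁)` is isomorphic to `L^(1, s)`, an isomorphism being given by
rescaling the basis elements `Vₙ ↦ (√e₁)^(−n) Vₙ` (where `√e₁` is any fixed
square root `r` of `e₁`); in particular, for any `e₁, e₁' ≠ 0` the Lie
algebras `L^(e₁, s·e₁)` and `L^(e₁', s·e₁')` are isomorphic (the family over
the line `D_s = {e₂ = s·e₁}` is a jump deformation). -/
theorem L_jump_deformation_on_Ds (s : ℂ) :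
    (∀ e₁ : ℂ, e₁ ≠ 0 → ∀ r : ℂ, r ^ 2 = e₁ →
      ∃ φ : (ℤ →₀ ℂ) ≃ₗ[ℂ] (ℤ →₀ ℂ),
        (∀ n : ℤ, φ (Finsupp.single n 1) = r ^ (-n) • Finsupp.single n 1) ∧
        (∀ f g : ℤ →₀ ℂ, φ (Lbr 1 s f g) = Lbr e₁ (s * e₁) (φ f) (φ g))) ∧
    (∀ e₁ e₁' : ℂ, e₁ ≠ 0 → e₁' ≠ 0 →
      ∃ ψ : (ℤ →₀ ℂ) ≃ₗ[ℂ] (ℤ →₀ ℂ),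
        ∀ f g : ℤ →₀ ℂ, ψ (Lbr e₁ (s * e₁) f g) = Lbr e₁' (s * e₁') (ψ f) (ψ g)) := by
  refine ⟨fun e₁ he₁ r hr => ?_, fun e₁ e₁' he₁ he₁' => ?_⟩
  · have hr0 : r ≠ 0 := by rintro rfl; simp [← hr] at he₁
    refine ⟨rescale r hr0, rescale_single hr0, fun f g => ?_⟩
    simpa [hr, mul_comm s] using rescale_Lbr 1 s hr0 f g
  · obtain ⟨ρ, hρ⟩ := IsAlgClosed.exists_pow_nat_eq (e₁' / e₁) two_pos
    have hρe : ρ ^ 2 * e₁ = e₁' := by rw [hρ, div_mul_cancel₀ _ he₁]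
    have hρ0 : ρ ≠ 0 := by rintro rfl; simp [← hρe] at he₁'
    refine ⟨rescale ρ hρ0, fun f g => ?_⟩
    simpa [mul_left_comm _ s, hρe] using rescale_Lbr e₁ (s * e₁) hρ0 f g
end
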